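/- Let σ_1 = {2,3}, σ_2 = {5}, σ_3 = the set of primes not in {2,3,5}, giving a partition σ of the primes. Then the alternating group A_5 is the product of two σ-nilpotent subgroups (a copy of A_4 and a Sylow 5-subgroup), but A_5 is not σ-soluble. Hence the product of two σ-nilpotent finite groups need not be σ-soluble. -/

import Mathlib

open Pointwise

/-- `σ` is a partition of the set of all primes. -/
def IsPrimePartition {ι : Type*} (σ : ι → Set ℕ) : Prop :=
  (∀ i, ∀ p ∈ σ i, p.Prime) ∧ (∀ p : ℕ, p.Prime → ∃! i, p ∈ σ i)

/-- every prime dividing `n` lies in `σ i`. -/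
def PrimaryIn {ι : Type*} (σ : ι → Set ℕ) (i : ι) (n : ℕ) : Prop :=
  ∀ p : ℕ, p.Prime → p ∣ n → p ∈ σ i

/-- `σ i ∈ σ(G)` : some prime of `σ i` divides `|G|`. -/
def MemSigma {ι : Type*} (σ : ι → Set ℕ) (i : ι) (G : Type*) [Group G] : Prop :=
  ∃ p : ℕ, p.Prime ∧ p ∈ σ i ∧ p ∣ Nat.card G

/-- the centralizer of the factor `H/K` in `G` (as a set). -/
def chiefCentralizer {G : Type*} [Group G] (H K : Subgroup G) : Set G :=
  {g : G | ∀ h ∈ H, g * h * g⁻¹ * h⁻¹ ∈ K}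

/-- `H/K` is a chief factor of `G`. -/
def IsChiefFactor {G : Type*} [Group G] (H K : Subgroup G) : Prop :=
  H.Normal ∧ K.Normal ∧ K < H ∧
    ∀ L : Subgroup G, L.Normal → K ≤ L → L ≤ H → L = K ∨ L = H

/-- `H/K` is σ-central in `G` : `(H/K) ⋊ (G/C_G(H/K))` is σ-primary,
i.e. every prime dividing `|H/K| · |G/C_G(H/K)|` lies in one block of σ. -/
def SigmaCentral {ι : Type*} (σ : ι → Set ℕ) {G : Type*} [Group G]
    (H K : Subgroup G) : Prop :=
  ∃ i, PrimaryIn σ i ((Nat.card H / Nat.card K) * (Nat.card G / Nat.card (chiefCentralizer H K)))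

/-- `G` is σ-nilpotent: every chief factor is σ-central. -/
def SigmaNilpotent {ι : Type*} (σ : ι → Set ℕ) (G : Type*) [Group G] : Prop :=
  ∀ H K : Subgroup G, IsChiefFactor H K → SigmaCentral σ H K

/-- `G` is σ-soluble: every chief factor is σ-primary. -/
def SigmaSoluble {ι : Type*} (σ : ι → Set ℕ) (G : Type*) [Group G] : Prop :=
  ∀ H K : Subgroup G, IsChiefFactor H K → ∃ i, PrimaryIn σ i (Nat.card H / Nat.card K)

/-- `H` is a Hall π-subgroup of `G`. -/
def IsHall {G : Type*} [Group G] (π : Set ℕ) (H : Subgroup G) : Prop :=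
  (∀ p : ℕ, p.Prime → p ∣ Nat.card H → p ∈ π) ∧
  (∀ p : ℕ, p.Prime → p ∣ H.index → p ∉ π)

/-- `H` is a π-subgroup of `G`. -/
def IsPiSubgroup {G : Type*} [Group G] (π : Set ℕ) (H : Subgroup G) : Prop :=
  ∀ p : ℕ, p.Prime → p ∣ Nat.card H → p ∈ π

/-- `K` is a Hall π-subgroup of the subgroup `A` of `G`. -/
def IsHallIn {G : Type*} [Group G] (π : Set ℕ) (K A : Subgroup G) : Prop :=
  K ≤ A ∧ (∀ p : ℕ, p.Prime → p ∣ Nat.card K → p ∈ π) ∧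
    (∀ p : ℕ, p.Prime → p ∣ K.relIndex A → p ∉ π)

/-- `G` satisfies `D_π`. -/
def SatisfiesD (π : Set ℕ) (G : Type*) [Group G] : Prop :=
  (∃ H : Subgroup G, IsHall π H) ∧
  (∀ H K : Subgroup G, IsHall π H → IsHall π K →
      ∃ g : G, K = Subgroup.map (MulAut.conj g).toMonoidHom H) ∧
  (∀ S : Subgroup G, IsPiSubgroup π S →
      ∃ H : Subgroup G, IsHall π H ∧ S ≤ H)

/-- `N` is a minimal normal subgroup of `G`. -/
def IsMinimalNormal {G : Type*} [Group G] (N : Subgroup G) : Prop :=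
  N.Normal ∧ N ≠ ⊥ ∧ ∀ L : Subgroup G, L.Normal → L ≤ N → L = ⊥ ∨ L = N

/-- the σ-Fitting subgroup: product of all normal σ-nilpotent subgroups. -/
def sigmaFitting {ι : Type*} (σ : ι → Set ℕ) (G : Type*) [Group G] : Subgroup G :=
  ⨆ H ∈ {H : Subgroup G | H.Normal ∧ SigmaNilpotent σ H}, H

/-- `O_π(G)`: the largest normal π-subgroup, i.e. product of all normal π-subgroups. -/
def Opi (π : Set ℕ) (G : Type*) [Group G] : Subgroup G :=
  ⨆ H ∈ {H : Subgroup G | H.Normal ∧ IsPiSubgroup π H}, H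

/-!
The stabiliser of a point in `A₅` (a copy of `A₄`) is a `{2,3}`-group and a Sylow 5-subgroup is a
`{5}`-group; a group all of whose prime divisors lie in one block of `σ` is σ-nilpotent. Their
orders 12 and 5 are coprime with product 60, so the two subgroups are complements in `A₅`.
On the other hand `A₅` is simple, so `A₅/1` is a chief factor, and its order 60 is divisible
by 2 and 5, which lie in different blocks.
-/

section SigmaTheory

variable {ι : Type*} {σ : ι → Set ℕ} {G : Type*} [Group G]

def chiefCentralizerSubgroup (H K : Subgroup G) [K.Normal] : Subgroup G where
  carrier := chiefCentralizer H K
  one_mem' h _ := by simp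
  mul_mem' {a b} ha hb h hh := by
    have key : a * b * h * (a * b)⁻¹ * h⁻¹ =
        a * (b * h * b⁻¹ * h⁻¹) * a⁻¹ * (a * h * a⁻¹ * h⁻¹) := by group
    rw [key]
    exact K.mul_mem (Subgroup.Normal.conj_mem ‹_› _ (hb h hh) a) (ha h hh)
  inv_mem' {a} ha h hh := by
    have key : a⁻¹ * h * a⁻¹⁻¹ * h⁻¹ = h * (a⁻¹ * (a * h⁻¹ * a⁻¹ * h) * a⁻¹⁻¹) * h⁻¹ := by
      group
    rw [key]
    exact Subgroup.Normal.conj_mem ‹_› _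
      (Subgroup.Normal.conj_mem ‹_› _ (by simpa using ha h⁻¹ (H.inv_mem hh)) a⁻¹) h

lemma card_chiefCentralizer_dvd (H K : Subgroup G) [K.Normal] :
    Nat.card (chiefCentralizer H K) ∣ Nat.card G :=
  (chiefCentralizerSubgroup H K).card_subgroup_dvd_card

lemma sigmaNilpotent_of_primaryIn_card {i : ι} (hG : PrimaryIn σ i (Nat.card G)) :
    SigmaNilpotent σ G := by
  rintro H K ⟨-, hK, hKH, -⟩
  refine ⟨i, fun p hp hdvd => hG p hp ?_⟩
  have hfactor : Nat.card H / Nat.card K ∣ Nat.card G :=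
    (Nat.div_dvd_of_dvd (Subgroup.card_dvd_of_le hKH.le)).trans H.card_subgroup_dvd_card
  have hacting : Nat.card G / Nat.card (chiefCentralizer H K) ∣ Nat.card G :=
    Nat.div_dvd_of_dvd (card_chiefCentralizer_dvd H K)
  rcases hp.dvd_mul.mp hdvd with h | h
  exacts [h.trans hfactor, h.trans hacting]

lemma isChiefFactor_top_bot [IsSimpleGroup G] : IsChiefFactor (⊤ : Subgroup G) ⊥ :=
  ⟨inferInstance, inferInstance, bot_lt_top, fun _ hL _ _ => hL.eq_bot_or_eq_top⟩

lemma SigmaSoluble.primaryIn_card [IsSimpleGroup G] (h : SigmaSoluble σ G) :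
    ∃ i, PrimaryIn σ i (Nat.card G) := by
  simpa using h ⊤ ⊥ isChiefFactor_top_bot

end SigmaTheory

lemma card_stabilizer_alternatingGroup_five :
    Nat.card (MulAction.stabilizer (alternatingGroup (Fin 5)) (4 : Fin 5)) = 12 := by
  rw [Nat.card_eq_fintype_card]
  decide

lemma card_alternatingGroup_five : Nat.card (alternatingGroup (Fin 5)) = 60 := by
  rw [nat_card_alternatingGroup, Nat.card_fin]
  rfl

/-- With `σ₁ = {2,3}`, `σ₂ = {5}`, `σ₃` the remaining primes, `A₅` is the product
of two σ-nilpotent subgroups (a copy of `A₄` of order 12 and a Sylow 5-subgroup of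
order 5), but `A₅` is not σ-soluble. -/
theorem alternatingGroup_five_product_of_sigma_nilpotents_not_sigma_soluble :
    letI σ : Fin 3 → Set ℕ :=
      ![{2, 3}, {5}, {p : ℕ | p.Prime ∧ p ∉ ({2, 3, 5} : Set ℕ)}]
    ∃ A B : Subgroup (alternatingGroup (Fin 5)),
      Nat.card A = 12 ∧ Nat.card B = 5 ∧
      SigmaNilpotent σ A ∧ SigmaNilpotent σ B ∧
      (A : Set (alternatingGroup (Fin 5))) * (B : Set (alternatingGroup (Fin 5)))
        = Set.univ ∧
      ¬ SigmaSoluble σ (alternatingGroup (Fin 5)) := by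
  have : Fact (Nat.Prime 5) := ⟨Nat.prime_five⟩
  obtain ⟨B, hB⟩ := Sylow.exists_subgroup_card_pow_prime 5 (n := 1)
    (by rw [card_alternatingGroup_five]; norm_num)
  rw [pow_one] at hB
  set A := MulAction.stabilizer (alternatingGroup (Fin 5)) (4 : Fin 5)
  have hA : Nat.card A = 12 := card_stabilizer_alternatingGroup_five
  have hA_primes : ∀ p : ℕ, p.Prime → p ∣ Nat.card A → p = 2 ∨ p = 3 := fun p hp hdvd => by
    rw [hA, show 12 = 2 ^ 2 * 3 by rfl] at hdvd
    rcases hp.dvd_mul.mp hdvd with h | h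
    · exact Or.inl ((Nat.prime_dvd_prime_iff_eq hp Nat.prime_two).mp (hp.dvd_of_dvd_pow h))
    · exact Or.inr ((Nat.prime_dvd_prime_iff_eq hp Nat.prime_three).mp h)
  have hB_primes : ∀ p : ℕ, p.Prime → p ∣ Nat.card B → p = 5 := fun p hp hdvd =>
    (Nat.prime_dvd_prime_iff_eq hp Nat.prime_five).mp (hB ▸ hdvd)
  have hAB : Subgroup.IsComplement' A B :=
    Subgroup.isComplement'_of_coprime (by rw [hA, hB, card_alternatingGroup_five])
      (by rw [hA, hB]; norm_num)
  refine ⟨A, B, hA, hB, sigmaNilpotent_of_primaryIn_card (i := 0) hA_primes,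
    sigmaNilpotent_of_primaryIn_card (i := 1) hB_primes, hAB.mul_eq, fun hsol => ?_⟩
  obtain ⟨i, hi⟩ := hsol.primaryIn_card
  rw [card_alternatingGroup_five] at hi
  have h2 := hi 2 Nat.prime_two (by norm_num)
  have h5 := hi 5 Nat.prime_five (by norm_num)
  fin_cases i <;> simp_all
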